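/- Let (t_j)_{j=0}^{κ} be a sequence of complex p×q matrices, A a complex p×q matrix, and (s_j)_{j=0}^{κ+1} the inverse α-Schur transform corresponding to [(t_j), A]. Then the α-reciprocal sequence of (s_j) is given explicitly by s_0^{♯,α} = A^{+} and s_j^{♯,α} = -A^{+} t_{j-1} A^{+} for 1 ≤ j ≤ κ+1, and moreover (s_j^{♯,α})_j^{♯} = s_j^{[+,α]} for all j. -/

import Mathlib

/-!
The α-shift `u = s^{[+,α]}` of the inverse α-Schur transform satisfies `u₀ = A` and
`u_{j+1} = A A⁺ (t A⁺ ⋆ u)_j`, where `⋆` is the Cauchy product of matrix sequences. The recursion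
defining the reciprocal sequence `r = u^♯` says precisely that `A⁺ (u ⋆ r)_j = 0` for `j ≥ 1`;
by associativity of `⋆` and `A⁺ A A⁺ = A⁺`, this collapses `r_{j+1}` to `-A⁺ t_j A⁺`. Feeding
this into the recursion for `r^♯`, with `(A⁺)⁺ = A`, returns `u` by strong induction.

The Moore–Penrose inverse exists as `(AᴴA)⁺ Aᴴ`, the Hermitian matrix `AᴴA` being
pseudo-inverted through its spectral decomposition.
-/

open Matrix BigOperators

def IsMP {m n : Type*} [Fintype m] [Fintype n] (A : Matrix m n ℂ) (B : Matrix n m ℂ) : Prop :=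
  A * B * A = A ∧ B * A * B = B ∧ (A * B)ᴴ = A * B ∧ (B * A)ᴴ = B * A

open Classical in
noncomputable def mp {m n : Type*} [Fintype m] [Fintype n] (A : Matrix m n ℂ) : Matrix n m ℂ :=
  if h : ∃ B, IsMP A B then h.choose else 0

noncomputable def recip {p q : ℕ} (s : ℕ → Matrix (Fin p) (Fin q) ℂ) :
    ℕ → Matrix (Fin q) (Fin p) ℂ
  | 0 => mp (s 0)
  | (j+1) => -(mp (s 0) * ∑ l : Fin (j+1), s (j+1 - l.val) * recip s l.val)
termination_by j => j
decreasing_by exact l.isLt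

noncomputable def shiftA {p q : ℕ} (α : ℂ) (s : ℕ → Matrix (Fin p) (Fin q) ℂ) :
    ℕ → Matrix (Fin p) (Fin q) ℂ
  | 0 => s 0
  | (j+1) => (-α) • s j + s (j+1)

noncomputable def recipA {p q : ℕ} (α : ℂ) (s : ℕ → Matrix (Fin p) (Fin q) ℂ) :
    ℕ → Matrix (Fin q) (Fin p) ℂ :=
  recip (shiftA α s)

/-- the inverse α-Schur transform corresponding to [(t_j), A]. -/
noncomputable def invT {p q : ℕ} (α : ℂ) (t : ℕ → Matrix (Fin p) (Fin q) ℂ)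
    (A : Matrix (Fin p) (Fin q) ℂ) : ℕ → Matrix (Fin p) (Fin q) ℂ
  | 0 => A
  | (j+1) => α ^ (j + 1) • A + ∑ l : Fin (j + 1), α ^ (j - l.val) •
      (A * mp A * ∑ k : Fin (l.val + 1),
        t (l.val - k.val) * mp A *
          ((-α) • (if k.val = 0 then 0 else invT α t A (k.val - 1)) + invT α t A k.val))
termination_by j => j
decreasing_by
  · have hk := k.isLt; have hl := l.isLt; omega
  · have hk := k.isLt; have hl := l.isLt; omega

namespace IsMP

variable {m n : Type*} [Fintype m] [Fintype n] {A : Matrix m n ℂ} {B C : Matrix n m ℂ}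

theorem symm (h : IsMP A B) : IsMP B A :=
  ⟨h.2.1, h.1, h.2.2.2, h.2.2.1⟩

theorem conjTranspose (h : IsMP A B) : IsMP Aᴴ Bᴴ := by
  obtain ⟨h₁, h₂, h₃, h₄⟩ := h
  refine ⟨?_, ?_, ?_, ?_⟩
  · simpa only [conjTranspose_mul, Matrix.mul_assoc] using congrArg Matrix.conjTranspose h₁
  · simpa only [conjTranspose_mul, Matrix.mul_assoc] using congrArg Matrix.conjTranspose h₂
  · rw [← conjTranspose_mul, h₄]; exact h₄
  · rw [← conjTranspose_mul, h₃]; exact h₃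

theorem unique (hB : IsMP A B) (hC : IsMP A C) : B = C := by
  obtain ⟨hB₁, hB₂, hB₃, hB₄⟩ := hB
  obtain ⟨hC₁, hC₂, hC₃, hC₄⟩ := hC
  have hAB : A * B = A * C :=
    calc A * B = (A * C * A * B)ᴴ := by rw [hC₁, hB₃]
      _ = (A * B)ᴴ * (A * C)ᴴ := by rw [Matrix.mul_assoc (A * C), conjTranspose_mul]
      _ = A * C := by rw [hB₃, hC₃, ← Matrix.mul_assoc, hB₁]
  have hBA : B * A = C * A :=
    calc B * A = (B * (A * C * A))ᴴ := by rw [hC₁, hB₄]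
      _ = (C * A)ᴴ * (B * A)ᴴ := by
        rw [Matrix.mul_assoc A C A, ← Matrix.mul_assoc B A, conjTranspose_mul]
      _ = C * A := by rw [hC₄, hB₄, Matrix.mul_assoc, ← Matrix.mul_assoc A B A, hB₁]
  calc B = B * A * B := hB₂.symm
    _ = C * A * C := by rw [Matrix.mul_assoc, hAB, ← Matrix.mul_assoc, hBA]
    _ = C := hC₂

theorem conjTranspose_eq_self {H K : Matrix n n ℂ} (hH : H.IsHermitian) (h : IsMP H K) :
    Kᴴ = K := by
  have := h.conjTranspose
  rw [hH.eq] at this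
  exact this.unique h

theorem conj_unitary [DecidableEq n] {M N U : Matrix n n ℂ} (hU : star U * U = 1)
    (h : IsMP M N) : IsMP (U * M * star U) (U * N * star U) := by
  obtain ⟨h₁, h₂, h₃, h₄⟩ := h
  have hmul : ∀ X Y : Matrix n n ℂ, U * X * star U * (U * Y * star U) = U * (X * Y) * star U := by
    intro X Y
    simp only [Matrix.mul_assoc]
    rw [← Matrix.mul_assoc (star U) U, hU, Matrix.one_mul]
  have hstar : ∀ X : Matrix n n ℂ, (U * X * star U)ᴴ = U * Xᴴ * star U := by
    intro X
    simp only [conjTranspose_mul, star_eq_conjTranspose, conjTranspose_conjTranspose,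
      Matrix.mul_assoc]
  refine ⟨?_, ?_, ?_, ?_⟩ <;> simp only [hmul, hstar, h₁, h₂, h₃, h₄]

end IsMP

theorem isMP_diagonal_inv {n : Type*} [Fintype n] [DecidableEq n] (d : n → ℂ) :
    IsMP (diagonal d) (diagonal d⁻¹) := by
  refine ⟨?_, ?_, ?_, ?_⟩ <;> simp only [diagonal_mul_diagonal, diagonal_conjTranspose] <;>
    congr 1 <;> funext i <;> rcases eq_or_ne (d i) 0 with h | h <;> simp [h]

theorem Matrix.IsHermitian.exists_isMP {n : Type*} [Fintype n] {H : Matrix n n ℂ}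
    (hH : H.IsHermitian) : ∃ B, IsMP H B := by
  classical
  set U : Matrix n n ℂ := (hH.eigenvectorUnitary : Matrix n n ℂ)
  have hspec : H = U * diagonal (RCLike.ofReal ∘ hH.eigenvalues) * star U := hH.spectral_theorem
  have h := (isMP_diagonal_inv (RCLike.ofReal ∘ hH.eigenvalues)).conj_unitary
    (Unitary.coe_star_mul_self hH.eigenvectorUnitary)
  rw [← hspec] at h
  exact ⟨_, h⟩

open scoped ComplexOrder in
theorem isMP_mul_conjTranspose_of_isMP_conjTranspose_mul {m n : Type*} [Fintype m] [Fintype n]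
    {A : Matrix m n ℂ} {B : Matrix n n ℂ} (h : IsMP (Aᴴ * A) B) : IsMP A (B * Aᴴ) := by
  classical
  have hB : Bᴴ = B := h.conjTranspose_eq_self (isHermitian_conjTranspose_mul_self A)
  have hA : A * (B * (Aᴴ * A)) = A := by
    have h₀ : Aᴴ * A * (1 - B * (Aᴴ * A)) = 0 := by
      rw [Matrix.mul_sub, Matrix.mul_one, ← Matrix.mul_assoc, h.1, sub_self]
    rw [conjTranspose_mul_self_mul_eq_zero, Matrix.mul_sub, Matrix.mul_one, sub_eq_zero] at h₀
    exact h₀.symm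
  refine ⟨?_, ?_, ?_, ?_⟩
  · simpa only [Matrix.mul_assoc] using hA
  · simpa only [Matrix.mul_assoc] using congrArg (· * Aᴴ) h.2.1
  · simp only [conjTranspose_mul, hB, conjTranspose_conjTranspose, Matrix.mul_assoc]
  · rw [Matrix.mul_assoc]; exact h.2.2.2

theorem exists_isMP {m n : Type*} [Fintype m] [Fintype n] (A : Matrix m n ℂ) :
    ∃ B, IsMP A B :=
  let ⟨B, hB⟩ := (isHermitian_conjTranspose_mul_self A).exists_isMP
  ⟨B * Aᴴ, isMP_mul_conjTranspose_of_isMP_conjTranspose_mul hB⟩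

section MoorePenrose

variable {m n : Type*} [Fintype m] [Fintype n]

open Classical in
theorem isMP_mp (A : Matrix m n ℂ) : IsMP A (mp A) := by
  rw [mp, dif_pos (exists_isMP A)]
  exact (exists_isMP A).choose_spec

theorem mp_mp (A : Matrix m n ℂ) : mp (mp A) = A :=
  (isMP_mp (mp A)).unique (isMP_mp A).symm

theorem mp_mul_mul_mp (A : Matrix m n ℂ) : mp A * A * mp A = mp A :=
  (isMP_mp A).2.1

end MoorePenrose

section CauchyProduct

variable {R : Type*} [Semiring R] {l m n o : Type*}

def cauchyProduct [Fintype m] (f : ℕ → Matrix l m R) (g : ℕ → Matrix m n R) (j : ℕ) :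
    Matrix l n R :=
  ∑ i ∈ Finset.range (j + 1), f (j - i) * g i

variable [Fintype m]

theorem cauchyProduct_zero (f : ℕ → Matrix l m R) (g : ℕ → Matrix m n R) :
    cauchyProduct f g 0 = f 0 * g 0 := by
  simp [cauchyProduct]

theorem cauchyProduct_succ (f : ℕ → Matrix l m R) (g : ℕ → Matrix m n R) (j : ℕ) :
    cauchyProduct f g (j + 1) = cauchyProduct (fun i => f (i + 1)) g j + f 0 * g (j + 1) := by
  rw [cauchyProduct, Finset.sum_range_succ, Nat.sub_self, cauchyProduct]
  congr 1
  refine Finset.sum_congr rfl fun i hi => ?_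
  rw [Nat.sub_add_comm (Finset.mem_range_succ_iff.mp hi)]

theorem cauchyProduct_congr_right {f : ℕ → Matrix l m R} {g g' : ℕ → Matrix m n R} {j : ℕ}
    (h : ∀ i ≤ j, g i = g' i) : cauchyProduct f g j = cauchyProduct f g' j :=
  Finset.sum_congr rfl fun i hi => by rw [h i (Finset.mem_range_succ_iff.mp hi)]

theorem mul_cauchyProduct [Fintype l] (M : Matrix o l R) (f : ℕ → Matrix l m R)
    (g : ℕ → Matrix m n R) (j : ℕ) :
    M * cauchyProduct f g j = cauchyProduct (fun i => M * f i) g j := by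
  simp only [cauchyProduct, Matrix.mul_sum, Matrix.mul_assoc]

theorem cauchyProduct_assoc [Fintype n] (f : ℕ → Matrix l m R) (g : ℕ → Matrix m n R)
    (h : ℕ → Matrix n o R) (j : ℕ) :
    cauchyProduct (cauchyProduct f g) h j = cauchyProduct f (cauchyProduct g h) j := by
  simp only [cauchyProduct, Matrix.sum_mul, Matrix.mul_sum, Matrix.mul_assoc, Finset.sum_sigma']
  apply Finset.sum_nbij' (fun x => ⟨x.1 + x.2, x.1⟩) (fun x => ⟨x.2, x.1 - x.2⟩) <;>
    simp only [Finset.mem_sigma, Finset.mem_range, Sigma.forall] <;> intros <;>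
    simp [Nat.sub_sub] <;> omega

end CauchyProduct

section Reciprocal

variable {p q : ℕ}

theorem recip_zero (s : ℕ → Matrix (Fin p) (Fin q) ℂ) : recip s 0 = mp (s 0) := by
  rw [recip]

theorem recip_succ (s : ℕ → Matrix (Fin p) (Fin q) ℂ) (j : ℕ) :
    recip s (j + 1) = -(mp (s 0) * cauchyProduct (fun i => s (i + 1)) (recip s) j) := by
  rw [recip, Fin.sum_univ_eq_sum_range (fun l => s (j + 1 - l) * recip s l), cauchyProduct]
  congr 2
  refine Finset.sum_congr rfl fun i hi => ?_
  rw [Nat.sub_add_comm (Finset.mem_range_succ_iff.mp hi)]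

theorem mp_mul_cauchyProduct_recip_succ (s : ℕ → Matrix (Fin p) (Fin q) ℂ) (j : ℕ) :
    mp (s 0) * cauchyProduct s (recip s) (j + 1) = 0 := by
  rw [cauchyProduct_succ, recip_succ, Matrix.mul_add, Matrix.mul_neg, Matrix.mul_neg,
    ← Matrix.mul_assoc, ← Matrix.mul_assoc, mp_mul_mul_mp, add_neg_cancel]

variable {u : ℕ → Matrix (Fin p) (Fin q) ℂ} {t : ℕ → Matrix (Fin p) (Fin q) ℂ}
  {A : Matrix (Fin p) (Fin q) ℂ}

theorem recip_succ_of_eq_cauchyProduct (hu₀ : u 0 = A)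
    (hu : ∀ j, u (j + 1) = A * mp A * cauchyProduct (fun i => t i * mp A) u j) (j : ℕ) :
    recip u (j + 1) = -(mp A * t j * mp A) := by
  have hconv : ∀ i, mp A * cauchyProduct u (recip u) (i + 1) = 0 := by
    rw [← hu₀]; exact mp_mul_cauchyProduct_recip_succ u
  have htail : cauchyProduct (fun i => t i * mp A) (cauchyProduct u (recip u)) j =
      t j * mp A * (A * mp A) := by
    rw [cauchyProduct, Finset.sum_range_succ', Nat.sub_zero, cauchyProduct_zero, recip_zero, hu₀]
    simp only [Matrix.mul_assoc, hconv, Matrix.mul_zero, Finset.sum_const_zero, zero_add]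
  calc recip u (j + 1)
      = -(mp A * cauchyProduct (fun i => A * mp A * cauchyProduct (fun i => t i * mp A) u i)
          (recip u) j) := by simp only [recip_succ, hu₀, hu]
    _ = -(mp A * A * mp A *
          cauchyProduct (cauchyProduct (fun i => t i * mp A) u) (recip u) j) := by
        rw [← mul_cauchyProduct, Matrix.mul_assoc (mp A * A), Matrix.mul_assoc (mp A),
          Matrix.mul_assoc]
    _ = -(mp A * t j * mp A) := by
        have hPAP : mp A * (A * mp A) = mp A := by rw [← Matrix.mul_assoc, mp_mul_mul_mp]
        rw [mp_mul_mul_mp, cauchyProduct_assoc, htail]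
        simp only [Matrix.mul_assoc, hPAP]

theorem recip_recip_of_eq_cauchyProduct (hu₀ : u 0 = A)
    (hu : ∀ j, u (j + 1) = A * mp A * cauchyProduct (fun i => t i * mp A) u j) (j : ℕ) :
    recip (recip u) j = u j := by
  induction j using Nat.strong_induction_on with
  | _ j ih =>
    cases j with
    | zero => rw [recip_zero, recip_zero, hu₀, mp_mp]
    | succ j =>
      have hr₀ : mp (recip u 0) = A := by rw [recip_zero, hu₀, mp_mp]
      rw [recip_succ, hr₀, cauchyProduct_congr_right fun i hi => ih i (by omega), hu]
      simp only [recip_succ_of_eq_cauchyProduct hu₀ hu]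
      have hneg : (fun i => -(mp A * t i * mp A)) = fun i => -mp A * (t i * mp A) :=
        funext fun i => by rw [Matrix.neg_mul, Matrix.mul_assoc]
      rw [hneg, ← mul_cauchyProduct, Matrix.neg_mul, Matrix.mul_neg, neg_neg, Matrix.mul_assoc]

end Reciprocal

section InverseSchurTransform

variable {p q : ℕ} (α : ℂ) (t : ℕ → Matrix (Fin p) (Fin q) ℂ) (A : Matrix (Fin p) (Fin q) ℂ)

theorem invT_zero : invT α t A 0 = A := by
  rw [invT]

theorem invT_succ_eq_sum (j : ℕ) :
    invT α t A (j + 1) = α ^ (j + 1) • A + ∑ l ∈ Finset.range (j + 1), α ^ (j - l) •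
      (A * mp A * cauchyProduct (fun i => t i * mp A) (shiftA α (invT α t A)) l) := by
  have hshift : ∀ k, (-α) • (if k = 0 then 0 else invT α t A (k - 1)) + invT α t A k =
      shiftA α (invT α t A) k := by
    rintro (_ | k) <;> simp [shiftA]
  rw [invT]
  simp only [hshift, cauchyProduct, Finset.sum_range]

theorem invT_succ (j : ℕ) :
    invT α t A (j + 1) = α • invT α t A j +
      A * mp A * cauchyProduct (fun i => t i * mp A) (shiftA α (invT α t A)) j := by
  cases j with
  | zero => simp [invT_succ_eq_sum, invT_zero]
  | succ j =>
    rw [invT_succ_eq_sum, invT_succ_eq_sum, Finset.sum_range_succ, Nat.sub_self, pow_zero,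
      one_smul, smul_add, Finset.smul_sum, smul_smul, ← pow_succ', ← add_assoc]
    congr 2
    refine Finset.sum_congr rfl fun l hl => ?_
    rw [smul_smul, ← pow_succ', Nat.sub_add_comm (Finset.mem_range_succ_iff.mp hl)]

theorem shiftA_invT_succ (j : ℕ) :
    shiftA α (invT α t A) (j + 1) =
      A * mp A * cauchyProduct (fun i => t i * mp A) (shiftA α (invT α t A)) j := by
  rw [shiftA, invT_succ, neg_smul, neg_add_cancel_left]

end InverseSchurTransform

/-- Lemma 10.5: the α-reciprocal sequence of the inverse α-Schur transform and
    its reciprocal sequence are given explicitly. -/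
theorem stmt16 {p q : ℕ} (α : ℂ) (κ : ℕ∞)
    (t : ℕ → Matrix (Fin p) (Fin q) ℂ) (A : Matrix (Fin p) (Fin q) ℂ) :
    recipA α (invT α t A) 0 = mp A ∧
    (∀ j : ℕ, 1 ≤ j → (j : ℕ∞) ≤ κ + 1 →
      recipA α (invT α t A) j = -(mp A * t (j - 1) * mp A)) ∧
    (∀ j : ℕ, (j : ℕ∞) ≤ κ + 1 →
      recip (recipA α (invT α t A)) j = shiftA α (invT α t A) j) := by
  have hu₀ : shiftA α (invT α t A) 0 = A := invT_zero α t A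
  have hu := shiftA_invT_succ α t A
  refine ⟨?_, fun j hj _ => ?_, fun j _ => recip_recip_of_eq_cauchyProduct hu₀ hu j⟩
  · rw [recipA, recip_zero, hu₀]
  · obtain ⟨i, rfl⟩ := Nat.exists_eq_add_of_le' hj
    exact recip_succ_of_eq_cauchyProduct hu₀ hu i
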